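/- arXiv:1002.1456 — 3 statements merged into one kernel-verified Lean document; each statement's English description precedes it below -/
import Mathlib

section
/- For any two-player weighted game arena G with reachability objective C_i for Player i, the regret of Player i is finite if and only if Player i has a winning strategy (a strategy all of whose outcomes visit C_i). -/
/-!
If no strategy of Player `i` is winning, each of them has an outcome that misses `C`; its
utility is `⊤`, and so is the regret of every strategy.

Conversely, let `attr C i n` be the positions from which Player `i` can force a visit to `C`
within `n` rounds. In a finite arena these sets stabilise at some level `N`, and the complement
of `attr C i N` is a trap: Player `i` cannot leave it and her opponent can always stay in it.
A winning strategy therefore forces the initial position into `attr C i N`, and the strategy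
descending through the levels of the attractor reaches `C` within `N` rounds against every
opponent, so its utility, hence its regret, is bounded by `(N + 1) * max w`.
-/

open scoped ENat

/-- A strategy maps a finite play (history, current position last) to the chosen
next position. -/
abbrev Strat (S : Type) := List S → S

/-- A two-player turn-based game arena: an ownership function (`true` = Player 1,
`false` = Player 2), an initial position and a transition relation. -/
structure Arena (S : Type) where
  owner : S → Bool
  init : S
  edge : S → S → Prop

namespace Arena

variable {S : Type}

/-- A strategy is valid if it always follows edges of the arena. -/
def Valid (A : Arena S) (σ : Strat S) : Prop :=
  ∀ l : List S, A.edge (l.getLastD A.init) (σ l)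

/-- Combine the strategy `σi` of player `i` with the strategy `σo` of her
opponent into a strategy profile. -/
def pairFor (i : Bool) (σi σo : Strat S) : Bool → Strat S :=
  fun b => if b = i then σi else σo

/-- The prefix of length `n` of the outcome of a strategy profile. -/
def outList (A : Arena S) (σ : Bool → Strat S) : ℕ → List S
  | 0 => [A.init]
  | n + 1 =>
      let l := outList A σ n
      l ++ [σ (A.owner (l.getLastD A.init)) l]

/-- The position reached after `n` rounds. -/
def cur (A : Arena S) (σ : Bool → Strat S) (n : ℕ) : S :=
  (A.outList σ n).getLastD A.init

/-- The total weight of a finite play. -/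
def pathWeight (w : S → S → ℕ) (l : List S) : ℕ :=
  ((l.zip l.tail).map fun p => w p.1 p.2).sum

/-- `n` is the round of the first visit of the outcome to the target set `C`. -/
def firstVisit (A : Arena S) (C : Set S) (σ : Bool → Strat S) (n : ℕ) : Prop :=
  A.cur σ n ∈ C ∧ ∀ m < n, A.cur σ m ∉ C

/-- The utility of a strategy profile w.r.t. edge weights `w` and target set `C`:
the sum of the weights up to the first visit to `C`, and `⊤` if `C` is never
visited. -/
noncomputable def util (A : Arena S) (w : S → S → ℕ) (C : Set S)
    (σ : Bool → Strat S) : ℕ∞ :=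
  ⨅ (n : ℕ) (_ : A.firstVisit C σ n), (pathWeight w (A.outList σ n) : ℕ∞)

/-- A strategy of player `i` is winning if all its outcomes against valid
opposing strategies visit the target set `C`. -/
def Winning (A : Arena S) (C : Set S) (i : Bool) (σi : Strat S) : Prop :=
  ∀ σo : Strat S, A.Valid σo → ∃ n, A.cur (pairFor i σi σo) n ∈ C

/-- Best response value of player `i` against opposing strategy `σo`. -/
noncomputable def br (A : Arena S) (w : S → S → ℕ) (C : Set S)
    (i : Bool) (σo : Strat S) : ℕ∞ :=
  ⨅ (σi : Strat S) (_ : A.Valid σi), A.util w C (pairFor i σi σo)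

end Arena

/-- Regret of utility `u` w.r.t. best-response value `b`, with the convention
`⊤ - ⊤ = ⊤`. -/
noncomputable def regPairVal (u b : ℕ∞) : ℕ∞ := if u = ⊤ then ⊤ else u - b

namespace Arena

variable {S : Type}

/-- The regret of strategy `σi` of player `i`. -/
noncomputable def regOf (A : Arena S) (w : S → S → ℕ) (C : Set S)
    (i : Bool) (σi : Strat S) : ℕ∞ :=
  ⨆ (σo : Strat S) (_ : A.Valid σo),
    regPairVal (A.util w C (pairFor i σi σo)) (A.br w C i σo)

/-- The minimal regret of player `i`. -/
noncomputable def regMin (A : Arena S) (w : S → S → ℕ) (C : Set S) (i : Bool) : ℕ∞ :=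
  ⨅ (σi : Strat S) (_ : A.Valid σi), A.regOf w C i σi

end Arena

namespace Arena

variable {S : Type} (A : Arena S)

section Plays

variable {i : Bool} {σi σo : Strat S} {n : ℕ}

lemma cur_succ (σ : Bool → Strat S) (n : ℕ) :
    A.cur σ (n + 1) = σ (A.owner (A.cur σ n)) (A.outList σ n) :=
  List.getLastD_concat ..

lemma length_outList (σ : Bool → Strat S) (n : ℕ) : (A.outList σ n).length = n + 1 := by
  induction n with
  | zero => rfl
  | succ n ih => simp [outList, ih]

lemma cur_succ_of_owner_eq (h : A.owner (A.cur (pairFor i σi σo) n) = i) :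
    A.cur (pairFor i σi σo) (n + 1) = σi (A.outList (pairFor i σi σo) n) := by
  rw [cur_succ, pairFor, if_pos h]

lemma cur_succ_of_owner_ne (h : A.owner (A.cur (pairFor i σi σo) n) ≠ i) :
    A.cur (pairFor i σi σo) (n + 1) = σo (A.outList (pairFor i σi σo) n) := by
  rw [cur_succ, pairFor, if_neg h]

end Plays

section Utility

variable {w : S → S → ℕ} {C : Set S} {σ : Bool → Strat S}

lemma pathWeight_le_length_mul {W : ℕ} (hW : ∀ s t, w s t ≤ W) (l : List S) :
    pathWeight w l ≤ l.length * W := by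
  refine (List.sum_le_card_nsmul _ W ?_).trans ?_
  · simp only [List.mem_map]
    rintro _ ⟨p, -, rfl⟩
    exact hW p.1 p.2
  · simp only [List.length_map, List.length_zip, List.length_tail, smul_eq_mul]
    gcongr
    omega

lemma util_eq_top (h : ∀ n, A.cur σ n ∉ C) : A.util w C σ = ⊤ := by
  simp [util, firstVisit, h]

lemma util_le_of_cur_mem {W : ℕ} (hW : ∀ s t, w s t ≤ W) {n : ℕ} (hn : A.cur σ n ∈ C) :
    A.util w C σ ≤ ((n + 1) * W : ℕ) := by
  classical
  have hex : ∃ m, A.cur σ m ∈ C := ⟨n, hn⟩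
  have hfirst : A.firstVisit C σ (Nat.find hex) :=
    ⟨Nat.find_spec hex, fun m hm => Nat.find_min hex hm⟩
  calc A.util w C σ ≤ pathWeight w (A.outList σ (Nat.find hex)) := iInf₂_le _ hfirst
    _ ≤ ((n + 1) * W : ℕ) := by
      gcongr
      refine (pathWeight_le_length_mul hW _).trans ?_
      rw [length_outList]
      gcongr
      exact Nat.find_min' hex hn

end Utility

section Regret

variable {w : S → S → ℕ} {C : Set S} {i : Bool} {σi : Strat S}

lemma regOf_eq_top_of_not_winning (h : ¬ A.Winning C i σi) : A.regOf w C i σi = ⊤ := by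
  simp only [Winning, not_forall, not_exists] at h
  obtain ⟨σo, hσo, hmiss⟩ := h
  refine top_le_iff.1 (le_iSup₂_of_le σo hσo ?_)
  rw [regPairVal, if_pos (A.util_eq_top hmiss)]

lemma regOf_le_of_util_le {B : ℕ}
    (h : ∀ σo, A.Valid σo → A.util w C (pairFor i σi σo) ≤ B) : A.regOf w C i σi ≤ B := by
  refine iSup₂_le fun σo hσo => ?_
  rw [regPairVal, if_neg (ne_top_of_le_ne_top (ENat.natCast_ne_top B) (h σo hσo))]
  exact tsub_le_self.trans (h σo hσo)

lemma regMin_eq_top_of_not_winning (h : ∀ σi, A.Valid σi → ¬ A.Winning C i σi) :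
    A.regMin w C i = ⊤ :=
  iInf₂_eq_top.2 fun σi hσi => A.regOf_eq_top_of_not_winning (h σi hσi)

end Regret

section Attractor

variable (C : Set S) (i : Bool)

def cpre (X : Set S) : Set S :=
  {s | if A.owner s = i then ∃ t, A.edge s t ∧ t ∈ X else ∀ t, A.edge s t → t ∈ X}

def attr : ℕ → Set S
  | 0 => C
  | n + 1 => C ∪ A.cpre i (attr n)

lemma cpre_mono {X Y : Set S} (h : X ⊆ Y) : A.cpre i X ⊆ A.cpre i Y := by
  intro s hs
  rw [cpre, Set.mem_ofPred_eq] at hs ⊢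
  split_ifs at hs ⊢
  · obtain ⟨t, ht, htX⟩ := hs
    exact ⟨t, ht, h htX⟩
  · exact fun t ht => h (hs t ht)

lemma attr_monotone : Monotone (A.attr C i) := by
  refine monotone_nat_of_le_succ fun n => ?_
  induction n with
  | zero => exact Set.subset_union_left
  | succ n ih => exact Set.union_subset_union_right _ (A.cpre_mono i ih)

lemma exists_attr_succ_eq [Finite S] : ∃ N, A.attr C i (N + 1) = A.attr C i N := by
  obtain ⟨N, hN⟩ := WellFoundedGT.monotone_chain_condition ⟨_, A.attr_monotone C i⟩
  exact ⟨N, (hN (N + 1) N.le_succ).symm⟩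

end Attractor

section Strategies

open Classical in
noncomputable def moveInto (X : List S → Set S) (τ : Strat S) : Strat S := fun l =>
  if h : ∃ t, A.edge (l.getLastD A.init) t ∧ t ∈ X l then h.choose else τ l

variable {X : List S → Set S} {τ : Strat S}

lemma moveInto_valid (hτ : A.Valid τ) : A.Valid (A.moveInto X τ) := by
  intro l
  unfold moveInto
  split_ifs with h
  · exact h.choose_spec.1
  · exact hτ l

lemma moveInto_mem {l : List S} (h : ∃ t, A.edge (l.getLastD A.init) t ∧ t ∈ X l) :
    A.moveInto X τ l ∈ X l := by
  unfold moveInto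
  rw [dif_pos h]
  exact h.choose_spec.2

/-- After `n` rounds (a history of length `n + 1`) this strategy moves into `attr C i (N - n - 1)`;
the fallback `τ` only serves to make it valid. -/
noncomputable def attractorStrategy (C : Set S) (i : Bool) (N : ℕ) (τ : Strat S) : Strat S :=
  A.moveInto (fun l => A.attr C i (N - l.length)) τ

lemma attractorStrategy_valid {C : Set S} {i : Bool} {N : ℕ} (hτ : A.Valid τ) :
    A.Valid (A.attractorStrategy C i N τ) :=
  A.moveInto_valid hτ

end Strategies

section Winning

variable {C : Set S} {i : Bool} {σi : Strat S}

lemma init_mem_attr_of_winning {N : ℕ} (hN : A.attr C i (N + 1) = A.attr C i N)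
    (hσi : A.Valid σi) (hwin : A.Winning C i σi) : A.init ∈ A.attr C i N := by
  by_contra hinit
  set σo := A.moveInto (fun _ => (A.attr C i N)ᶜ) σi
  have hout : ∀ n, A.cur (pairFor i σi σo) n ∉ A.attr C i N := by
    intro n
    induction n with
    | zero => exact hinit
    | succ n ih =>
      rw [← hN, attr, Set.mem_union, not_or, cpre, Set.mem_ofPred_eq] at ih
      split_ifs at ih with hown
      · rw [A.cur_succ_of_owner_eq hown]
        exact fun h => ih.2 ⟨_, hσi _, h⟩
      · rw [A.cur_succ_of_owner_ne hown]
        push Not at ih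
        exact A.moveInto_mem (X := fun _ => (A.attr C i N)ᶜ) ih.2
  obtain ⟨n, hn⟩ := hwin σo (A.moveInto_valid hσi)
  exact hout n (A.attr_monotone C i (Nat.zero_le N) hn)

lemma exists_cur_mem_of_init_mem_attr {N : ℕ} (hinit : A.init ∈ A.attr C i N) (τ : Strat S)
    {σo : Strat S} (hσo : A.Valid σo) :
    ∃ m ≤ N, A.cur (pairFor i (A.attractorStrategy C i N τ) σo) m ∈ C := by
  set σ := pairFor i (A.attractorStrategy C i N τ) σo
  have key : ∀ n ≤ N, (∃ m ≤ n, A.cur σ m ∈ C) ∨ A.cur σ n ∈ A.attr C i (N - n) := by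
    intro n
    induction n with
    | zero => exact fun _ => Or.inr hinit
    | succ n ih =>
      intro hn
      rcases ih (by omega) with ⟨m, hm, hC⟩ | hcur
      · exact Or.inl ⟨m, by omega, hC⟩
      obtain ⟨k, hk⟩ : ∃ k, N - n = k + 1 := ⟨N - n - 1, by omega⟩
      rw [hk, attr] at hcur
      rcases hcur with hC | hpre
      · exact Or.inl ⟨n, by omega, hC⟩
      right
      rw [cpre, Set.mem_ofPred_eq] at hpre
      split_ifs at hpre with hown
      · rw [A.cur_succ_of_owner_eq hown, show N - (n + 1) = k by omega]
        have hlen : N - (A.outList σ n).length = k := by rw [length_outList]; omega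
        have := A.moveInto_mem (X := fun l => A.attr C i (N - l.length)) (τ := τ)
          (l := A.outList σ n) (by rwa [hlen])
        rwa [hlen] at this
      · rw [A.cur_succ_of_owner_ne hown, show N - (n + 1) = k by omega]
        exact hpre _ (hσo _)
  rcases key N le_rfl with h | h
  · exact h
  · exact ⟨N, le_rfl, by simpa [attr] using h⟩

end Winning

end Arena

theorem regret_finite_iff_winning_general {S : Type} [Fintype S] (A : Arena S)
    (w : S → S → ℕ) (C : Set S) (i : Bool) :
    A.regMin w C i < ⊤ ↔ ∃ σi : Strat S, A.Valid σi ∧ A.Winning C i σi := by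
  constructor
  · intro hfin
    by_contra hno
    push Not at hno
    exact hfin.ne (A.regMin_eq_top_of_not_winning hno)
  · rintro ⟨σ, hσ, hwin⟩
    obtain ⟨N, hN⟩ := A.exists_attr_succ_eq C i
    have hinit := A.init_mem_attr_of_winning hN hσ hwin
    obtain ⟨W, hW⟩ := Finite.exists_le fun p : S × S => w p.1 p.2
    calc A.regMin w C i
        ≤ A.regOf w C i (A.attractorStrategy C i N σ) :=
          iInf₂_le _ (A.attractorStrategy_valid hσ)
      _ ≤ ((N + 1) * W : ℕ) := A.regOf_le_of_util_le fun σo hσo => by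
          obtain ⟨m, hm, hC⟩ := A.exists_cur_mem_of_init_mem_attr hinit σ hσo
          refine (A.util_le_of_cur_mem (fun s t => hW (s, t)) hC).trans ?_
          gcongr
      _ < ⊤ := ENat.natCast_lt_top _

/-- In a weighted game arena, the regret of Player `i` is finite
iff Player `i` has a winning strategy. -/
theorem regret_finite_iff_winning {S : Type} [Fintype S] (A : Arena S)
    (hsucc : ∀ s : S, ∃ t : S, A.edge s t)
    (w : S → S → ℕ) (C : Set S) (i : Bool) :
    A.regMin w C i < ⊤ ↔ ∃ σi : Strat S, A.Valid σi ∧ A.Winning C i σi :=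
  regret_finite_iff_winning_general A w C i
end

section
/- In a target-weighted arena, for every state (s,b) of the graph of best alternatives G' and every finite path π in G' from the initial state (s0, +∞) to (s,b), the best alternative of π equals b. -/
open scoped ENat

namespace Arena

variable {S : Type}

/-- Best value achievable from `s` when both players cooperate, in a
target-weighted arena with target set `C` and target weights `μ`. -/
noncomputable def best (A : Arena S) (μ : S → ℕ) (C : Set S) (s : S) : ℕ∞ :=
  ⨅ (t : S) (_ : t ∈ C ∧ Relation.ReflTransGen A.edge s t), (μ t : ℕ∞)

/-- Best alternative for Player 1 of moving from `s` to `s'`. -/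
noncomputable def ba (A : Arena S) (μ : S → ℕ) (C : Set S) (s s' : S) : ℕ∞ :=
  if A.owner s = true then
    ⨅ (s'' : S) (_ : A.edge s s'' ∧ s'' ≠ s'), A.best μ C s''
  else ⊤

/-- Best alternative along a finite path (minimum of the best alternatives of
its edges, `⊤` for paths without edges). -/
noncomputable def baPath (A : Arena S) (μ : S → ℕ) (C : Set S) (l : List S) : ℕ∞ :=
  ((l.zip l.tail).map fun p => A.ba μ C p.1 p.2).foldr min ⊤

/-- The graph of best alternatives `G'` of a target-weighted arena. -/
noncomputable def baArena (A : Arena S) (μ : S → ℕ) (C : Set S) : Arena (S × ℕ∞) where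
  owner := fun p => A.owner p.1
  init := (A.init, ⊤)
  edge := fun p q =>
    A.edge p.1 q.1 ∧
      q.2 = if A.owner p.1 = true then min p.2 (A.ba μ C p.1 q.1) else p.2

/-- Utility in a target-weighted arena: the weight of the first target visited,
`⊤` if no target is visited. -/
noncomputable def utilT (A : Arena S) (μ : S → ℕ∞) (C : Set S)
    (σ : Bool → Strat S) : ℕ∞ :=
  ⨅ (n : ℕ) (_ : A.firstVisit C σ n), μ (A.cur σ n)

/-- Best response value of player `i` in a target-weighted arena. -/
noncomputable def brT (A : Arena S) (μ : S → ℕ∞) (C : Set S)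
    (i : Bool) (σo : Strat S) : ℕ∞ :=
  ⨅ (σi : Strat S) (_ : A.Valid σi), A.utilT μ C (pairFor i σi σo)

/-- Regret of a strategy in a target-weighted arena. -/
noncomputable def regOfT (A : Arena S) (μ : S → ℕ∞) (C : Set S)
    (i : Bool) (σi : Strat S) : ℕ∞ :=
  ⨆ (σo : Strat S) (_ : A.Valid σo),
    regPairVal (A.utilT μ C (pairFor i σi σo)) (A.brT μ C i σo)

/-- Minimal regret of player `i` in a target-weighted arena. -/
noncomputable def regMinT (A : Arena S) (μ : S → ℕ∞) (C : Set S) (i : Bool) : ℕ∞ :=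
  ⨅ (σi : Strat S) (_ : A.Valid σi), A.regOfT μ C i σi

/-- The min-max value of player `i` in a target-weighted arena. -/
noncomputable def minmaxT (A : Arena S) (μ : S → ℕ∞) (C : Set S) (i : Bool) : ℕ∞ :=
  ⨅ (σi : Strat S) (_ : A.Valid σi), ⨆ (σo : Strat S) (_ : A.Valid σo),
    A.utilT μ C (pairFor i σi σo)

/-- The strategy mapping `Φ₁` from strategies of `G` to strategies of the graph
of best alternatives `G'`: it simulates the given strategy on first projections
while tracking the minimal best alternative seen so far. -/
noncomputable def Phi1 (A : Arena S) (μ : S → ℕ) (C : Set S) (σ : Strat S) :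
    Strat (S × ℕ∞) :=
  fun l =>
    let h := l.map Prod.fst
    let s := σ h
    (s, A.baPath μ C (h ++ [s]))

end Arena

theorem test2 : True := trivial

namespace Arena

variable {S : Type} (A : Arena S) (μ : S → ℕ) (C : Set S)

theorem baPath_singleton (x : S) : A.baPath μ C [x] = ⊤ := rfl

theorem baPath_cons_cons (x y : S) (t : List S) :
    A.baPath μ C (x :: y :: t) = min (A.ba μ C x y) (A.baPath μ C (y :: t)) := rfl

theorem snd_eq_min_ba_of_baArena_edge {p q : S × ℕ∞} (h : (A.baArena μ C).edge p q) :
    q.2 = min p.2 (A.ba μ C p.1 q.1) := by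
  obtain ⟨-, hq⟩ := h
  by_cases howner : A.owner p.1 = true
  · simpa [howner] using hq
  · simpa [howner, ba] using hq

theorem snd_getLast_eq_min_baPath (p : S × ℕ∞) (l : List (S × ℕ∞))
    (hchain : (p :: l).IsChain (A.baArena μ C).edge) :
    ((p :: l).getLast (List.cons_ne_nil p l)).2 =
      min p.2 (A.baPath μ C ((p :: l).map Prod.fst)) := by
  induction l generalizing p with
  | nil => simp [baPath_singleton]
  | cons q t ih =>
    rw [List.isChain_cons_cons] at hchain
    rw [List.getLast_cons_cons, ih q hchain.2, snd_eq_min_ba_of_baArena_edge A μ C hchain.1]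
    simp only [List.map_cons, baPath_cons_cons, min_assoc]

end Arena

theorem baPath_eq_snd_general {S : Type} (A : Arena S) (μ : S → ℕ) (C : Set S)
    (l : List (S × ℕ∞))
    (hchain : l.Chain' (A.baArena μ C).edge)
    (hhead : l.head? = some (A.init, (⊤ : ℕ∞)))
    (s : S) (b : ℕ∞) (hlast : l.getLast? = some (s, b)) :
    A.baPath μ C (l.map Prod.fst) = b := by
  cases l with
  | nil => simp at hhead
  | cons p l =>
    obtain rfl : p = (A.init, ⊤) := by simpa using hhead
    rw [List.getLast?_eq_some_getLast (List.cons_ne_nil _ l), Option.some_inj] at hlast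
    have hb := A.snd_getLast_eq_min_baPath μ C _ l hchain
    rw [hlast] at hb
    simpa using hb.symm

/-- In the graph of best alternatives, every finite path from
the initial state `(s0, ⊤)` to a state `(s, b)` has best alternative exactly
`b`. -/
theorem baPath_eq_snd {S : Type} (A : Arena S) (μ : S → ℕ) (C : Set S)
    (l : List (S × ℕ∞)) (hne : l ≠ [])
    (hchain : l.Chain' (A.baArena μ C).edge)
    (hhead : l.head? = some (A.init, (⊤ : ℕ∞)))
    (s : S) (b : ℕ∞) (hlast : l.getLast? = some (s, b)) :
    A.baPath μ C (l.map Prod.fst) = b :=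
  baPath_eq_snd_general A μ C l hchain hhead s b hlast
end

section
/- Iterated regret values decrease: for each player i and every j ≥ 0, P_i^{j+1} ⊆ P_i^j and reg_i^{G,j+1} ≤ reg_i^{G,j}, where P_i^j are the strategies surviving j rounds of deletion of non-regret-minimizing strategies. -/
open scoped ENat

section Iterated

variable {Λ1 Λ2 : Type}

/-- Regret of `x` when the row player is restricted to `P1` and the column
player to `P2` (utilities `u`, penalties to be minimized). -/
noncomputable def regP (u : Λ1 → Λ2 → ℕ∞) (P1 : Set Λ1) (P2 : Set Λ2)
    (x : Λ1) : ℕ∞ :=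
  ⨆ y ∈ P2, regPairVal (u x y) (⨅ x' ∈ P1, u x' y)

/-- Minimal regret of the row player over `P1` against `P2`. -/
noncomputable def regPmin (u : Λ1 → Λ2 → ℕ∞) (P1 : Set Λ1) (P2 : Set Λ2) : ℕ∞ :=
  ⨅ x ∈ P1, regP u P1 P2 x

/-- The delete operator: keep exactly the strategies of each player minimizing
her regret against the current strategy sets. -/
noncomputable def Dop (u1 u2 : Λ1 → Λ2 → ℕ∞) (P : Set Λ1 × Set Λ2) :
    Set Λ1 × Set Λ2 :=
  ({x ∈ P.1 | regP u1 P.1 P.2 x = regPmin u1 P.1 P.2},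
   {y ∈ P.2 | regP (fun y' x' => u2 x' y') P.2 P.1 y
      = regPmin (fun y' x' => u2 x' y') P.2 P.1})

/-- The strategies surviving `j` rounds of deletion. -/
noncomputable def Pset (u1 u2 : Λ1 → Λ2 → ℕ∞) (j : ℕ) : Set Λ1 × Set Λ2 :=
  (Dop u1 u2)^[j] (Set.univ, Set.univ)

end Iterated


private lemma exists_min_enat {α : Type*} (f : α → ℕ∞) {s : Set α} (hs : s.Nonempty) :
    ∃ a ∈ s, f a = ⨅ x ∈ s, f x := by
  obtain ⟨b, ⟨a, ha, rfl⟩, hmin⟩ :=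
    (wellFounded_lt (α := ℕ∞)).has_min (f '' s) (hs.image f)
  refine ⟨a, ha, le_antisymm (le_iInf₂ (f := fun x _ => f x) fun x hx => ?_) (iInf₂_le a ha)⟩
  exact not_lt.1 (hmin (f x) ⟨x, hx, rfl⟩)

private lemma regPairVal_anti (u : ℕ∞) {b b' : ℕ∞} (h : b ≤ b') :
    regPairVal u b' ≤ regPairVal u b := by
  unfold regPairVal
  split
  · exact le_rfl
  · exact tsub_le_tsub_left h u

private lemma regP_mono {Λ1 Λ2 : Type} (u : Λ1 → Λ2 → ℕ∞) {P1 P1' : Set Λ1}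
    {P2 P2' : Set Λ2} (h1 : P1' ⊆ P1) (h2 : P2' ⊆ P2) (x : Λ1) :
    regP u P1' P2' x ≤ regP u P1 P2 x := by
  refine iSup₂_le fun y hy => ?_
  refine le_trans (regPairVal_anti _ (le_iInf₂ fun x' hx' => iInf₂_le (f := fun x' _ => u x' y) x' (h1 hx'))) ?_
  exact le_iSup₂ (f := fun y _ => regPairVal (u x y) (⨅ x' ∈ P1, u x' y)) y (h2 hy)

/-- Iterated regret values decrease: for every `j`,
`P^{j+1} ⊆ P^j` (both players) and `reg^{G,j+2} ≤ reg^{G,j+1}`. -/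
theorem iterated_regret_decreasing {Λ1 Λ2 : Type} (u1 u2 : Λ1 → Λ2 → ℕ∞)
    (j : ℕ) :
    (Pset u1 u2 (j + 1)).1 ⊆ (Pset u1 u2 j).1 ∧
    (Pset u1 u2 (j + 1)).2 ⊆ (Pset u1 u2 j).2 ∧
    regPmin u1 (Pset u1 u2 (j + 1)).1 (Pset u1 u2 (j + 1)).2 ≤
      regPmin u1 (Pset u1 u2 j).1 (Pset u1 u2 j).2 ∧
    regPmin (fun y x => u2 x y) (Pset u1 u2 (j + 1)).2 (Pset u1 u2 (j + 1)).1 ≤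
      regPmin (fun y x => u2 x y) (Pset u1 u2 j).2 (Pset u1 u2 j).1 := by
  have hP : Pset u1 u2 (j + 1) = Dop u1 u2 (Pset u1 u2 j) :=
    Function.iterate_succ_apply' _ _ _
  set P := Pset u1 u2 j with hPdef
  rw [hP]
  have h1 : (Dop u1 u2 P).1 ⊆ P.1 := fun x hx => hx.1
  have h2 : (Dop u1 u2 P).2 ⊆ P.2 := fun y hy => hy.1
  refine ⟨h1, h2, ?_, ?_⟩
  · rcases P.1.eq_empty_or_nonempty with he | hne
    · have : regPmin u1 P.1 P.2 = ⊤ := by simp [regPmin, he]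
      rw [this]; exact le_top
    · obtain ⟨x0, hx0, hmin⟩ := exists_min_enat (regP u1 P.1 P.2) hne
      have hx0' : x0 ∈ (Dop u1 u2 P).1 := ⟨hx0, hmin⟩
      calc regPmin u1 (Dop u1 u2 P).1 (Dop u1 u2 P).2
          ≤ regP u1 (Dop u1 u2 P).1 (Dop u1 u2 P).2 x0 := iInf₂_le _ hx0'
        _ ≤ regP u1 P.1 P.2 x0 := regP_mono u1 h1 h2 x0
        _ = regPmin u1 P.1 P.2 := hmin
  · rcases P.2.eq_empty_or_nonempty with he | hne
    · have : regPmin (fun y x => u2 x y) P.2 P.1 = ⊤ := by simp [regPmin, he]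
      rw [this]; exact le_top
    · obtain ⟨y0, hy0, hmin⟩ :=
        exists_min_enat (regP (fun y x => u2 x y) P.2 P.1) hne
      have hy0' : y0 ∈ (Dop u1 u2 P).2 := ⟨hy0, hmin⟩
      calc regPmin (fun y x => u2 x y) (Dop u1 u2 P).2 (Dop u1 u2 P).1
          ≤ regP (fun y x => u2 x y) (Dop u1 u2 P).2 (Dop u1 u2 P).1 y0 :=
            iInf₂_le _ hy0'
        _ ≤ regP (fun y x => u2 x y) P.2 P.1 y0 := regP_mono _ h2 h1 y0
        _ = regPmin (fun y x => u2 x y) P.2 P.1 := hmin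
end
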